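/- Let u₁, u₂, … be i.i.d. standard normal random variables, and let c_i^{(n)}, 1 ≤ i ≤ n, be nonnegative constants with sup_{n,i} c_i^{(n)} < ∞ and (1/n) Σ_{i=1}^n c_i^{(n)} → c. Then (1/n) Σ_{i=1}^n c_i^{(n)} u_i² → c almost surely as n → ∞. -/

import Mathlib

/-!
Put `Z_i = c_i^{(n)} (u_i² - 1)`. These are independent, centred and bounded in `L⁴` uniformly
in `i` and `n`. In the expansion of the fourth power of `S_n = ∑_{i ≤ n} Z_i`, independence and
centring kill every term except `E[Z_i⁴]` and `E[Z_i² Z_j²]`, so `E[S_n⁴] = O(n²)` with a constant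
depending only on the bound on the weights; in particular the weights may change with `n`.
Hence `∑_n E[(S_n / n)⁴] < ∞`, so `∑_n (S_n / n)⁴ < ∞` almost surely and `S_n / n → 0`, while
`(1/n) ∑ c_i u_i² = S_n / n + (1/n) ∑ c_i`.
-/

open MeasureTheory ProbabilityTheory Filter Finset
open scoped ENNReal NNReal

namespace MeasureTheory

variable {Ω : Type*} [MeasurableSpace Ω] {μ : Measure Ω}

lemma MemLp.integrable_pow_of_le [IsFiniteMeasure μ] {X : Ω → ℝ} {p k : ℕ} (hX : MemLp X p μ)
    (hk : k ≤ p) : Integrable (fun ω => X ω ^ k) μ := by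
  refine ((hX.mono_exponent (by exact_mod_cast hk)).integrable_norm_pow').mono'
    (hX.aestronglyMeasurable.pow k) (Eventually.of_forall fun ω => ?_)
  simp [norm_pow]

lemma ae_tendsto_zero_of_summable_integral_abs_pow {W : ℕ → Ω → ℝ} {p : ℕ} (hp : p ≠ 0)
    (hint : ∀ n, Integrable (fun ω => |W n ω| ^ p) μ)
    (hsum : Summable fun n => ∫ ω, |W n ω| ^ p ∂μ) :
    ∀ᵐ ω ∂μ, Tendsto (fun n => W n ω) atTop (nhds 0) := by
  have hlin : ∫⁻ ω, ∑' n, ENNReal.ofReal (|W n ω| ^ p) ∂μ ≠ ∞ := by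
    rw [lintegral_tsum fun n => (hint n).aemeasurable.ennreal_ofReal]
    have h : ∀ n, ∫⁻ ω, ENNReal.ofReal (|W n ω| ^ p) ∂μ
        = ENNReal.ofReal (∫ ω, |W n ω| ^ p ∂μ) := fun n =>
      (ofReal_integral_eq_lintegral_ofReal (hint n) (ae_of_all _ fun _ => by positivity)).symm
    simp_rw [h]
    rw [← ENNReal.ofReal_tsum_of_nonneg (fun n => integral_nonneg fun _ => by positivity) hsum]
    exact ENNReal.ofReal_ne_top
  filter_upwards [ae_lt_top' (AEMeasurable.tsum fun n => (hint n).aemeasurable.ennreal_ofReal) hlin]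
    with ω hω
  have hpow : Tendsto (fun n => |W n ω| ^ p) atTop (nhds 0) := by
    have := ENNReal.tendsto_atTop_zero_of_tsum_ne_top hω.ne
    simpa [Function.comp_def, ENNReal.toReal_ofReal, abs_nonneg] using
      (ENNReal.tendsto_toReal ENNReal.zero_ne_top).comp this
  have := hpow.rpow_const (p := (p : ℝ)⁻¹) (Or.inr (by positivity))
  rw [tendsto_zero_iff_abs_tendsto_zero]
  simpa [Function.comp_def, ← Real.rpow_natCast, ← Real.rpow_mul (abs_nonneg _), hp] using this

lemma ae_tendsto_div_of_integral_pow_four_le [IsFiniteMeasure μ] {S : ℕ → Ω → ℝ}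
    (hS : ∀ n, MemLp (S n) 4 μ) {C : ℝ} (hC : ∀ n : ℕ, ∫ ω, S n ω ^ 4 ∂μ ≤ C * (n : ℝ) ^ 2) :
    ∀ᵐ ω ∂μ, Tendsto (fun n : ℕ => S n ω / n) atTop (nhds 0) := by
  have hint : ∀ n : ℕ, Integrable (fun ω => |S n ω / n| ^ 4) μ := fun n => by
    simpa only [div_eq_mul_inv, Real.norm_eq_abs] using
      ((hS n).mul_const (n : ℝ)⁻¹).integrable_norm_pow' (p := 4)
  have hbound : ∀ n : ℕ, ∫ ω, |S n ω / n| ^ 4 ∂μ ≤ C * ((n : ℝ) ^ 2)⁻¹ := fun n => by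
    simp_rw [(by decide : Even 4).pow_abs, div_pow, integral_div]
    rcases n.eq_zero_or_pos with rfl | hn
    · simp
    · rw [div_le_iff₀ (by positivity)]
      calc _ ≤ C * (n : ℝ) ^ 2 := hC n
        _ = _ := by field_simp
  exact ae_tendsto_zero_of_summable_integral_abs_pow four_ne_zero hint
    (.of_nonneg_of_le (fun n => integral_nonneg fun _ => by positivity) hbound
      ((Real.summable_nat_pow_inv.2 one_lt_two).mul_left C))

end MeasureTheory

namespace ProbabilityTheory

lemma integral_sq_gaussianReal_zero (v : ℝ≥0) : ∫ x, x ^ 2 ∂gaussianReal 0 v = v := by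
  simpa using (variance_of_integral_eq_zero aemeasurable_id integral_id_gaussianReal).symm

lemma memLp_sq_gaussianReal (m : ℝ) (v : ℝ≥0) (p : ℝ≥0) :
    MemLp (fun x : ℝ => x ^ 2) p (gaussianReal m v) := by
  have h := (memLp_norm_rpow_iff (q := 2) (p := (2 * p : ℝ≥0)) (μ := gaussianReal m v)
    aestronglyMeasurable_id (by simp) (by simp)).2 (memLp_id_gaussianReal (2 * p))
  simp only [id, Real.norm_eq_abs, ENNReal.toReal_ofNat, Real.rpow_two, sq_abs] at h
  have h2 : ((2 * p : ℝ≥0) : ℝ≥0∞) / 2 = p := by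
    push_cast
    rw [mul_comm]; exact ENNReal.mul_div_cancel_right (by simp) (by simp)
  rwa [h2] at h

lemma integral_sq_sub_one_gaussianReal : ∫ x, (x ^ 2 - 1) ∂gaussianReal 0 1 = 0 := by
  rw [integral_sub ((memLp_sq_gaussianReal 0 1 1).integrable le_rfl) (integrable_const 1),
    integral_sq_gaussianReal_zero]
  simp

variable {Ω : Type*} [MeasurableSpace Ω] {μ : Measure Ω}

lemma IndepFun.integral_pow_mul_pow {X Y : Ω → ℝ} (h : IndepFun X Y μ)
    (hX : AEStronglyMeasurable X μ) (hY : AEStronglyMeasurable Y μ) (p q : ℕ) :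
    ∫ ω, X ω ^ p * Y ω ^ q ∂μ = (∫ ω, X ω ^ p ∂μ) * ∫ ω, Y ω ^ q ∂μ :=
  (h.comp (measurable_id.pow_const p) (measurable_id.pow_const q)).integral_mul_eq_mul_integral
    (hX.pow p) (hY.pow q)

lemma IndepFun.integrable_pow_mul_pow {X Y : Ω → ℝ} (h : IndepFun X Y μ)
    {p q : ℕ} (hX : Integrable (fun ω => X ω ^ p) μ) (hY : Integrable (fun ω => Y ω ^ q) μ) :
    Integrable (fun ω => X ω ^ p * Y ω ^ q) μ :=
  (h.comp (measurable_id.pow_const p) (measurable_id.pow_const q)).integrable_mul hX hY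

lemma IndepFun.integral_add_pow_four [IsProbabilityMeasure μ] {X Y : Ω → ℝ} (h : IndepFun X Y μ)
    (hX : MemLp X 4 μ) (hY : MemLp Y 4 μ) (hX0 : ∫ ω, X ω ∂μ = 0) (hY0 : ∫ ω, Y ω ∂μ = 0) :
    ∫ ω, (X ω + Y ω) ^ 4 ∂μ
      = ∫ ω, X ω ^ 4 ∂μ + 6 * (∫ ω, X ω ^ 2 ∂μ) * (∫ ω, Y ω ^ 2 ∂μ) + ∫ ω, Y ω ^ 4 ∂μ := by
  have hint : ∀ p q, p ≤ 4 → q ≤ 4 → Integrable (fun ω => X ω ^ p * Y ω ^ q) μ := fun p q hp hq =>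
    h.integrable_pow_mul_pow (hX.integrable_pow_of_le hp) (hY.integrable_pow_of_le hq)
  have hmul := h.integral_pow_mul_pow hX.aestronglyMeasurable hY.aestronglyMeasurable
  -- every term in the shape `X ^ p * Y ^ q`, to match `hint` and `hmul`
  have hexpand : ∀ ω, (X ω + Y ω) ^ 4 = X ω ^ 4 * Y ω ^ 0 + 4 * (X ω ^ 3 * Y ω ^ 1)
      + 6 * (X ω ^ 2 * Y ω ^ 2) + 4 * (X ω ^ 1 * Y ω ^ 3) + X ω ^ 0 * Y ω ^ 4 := fun ω => by ring
  simp_rw [hexpand]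
  rw [integral_add, integral_add, integral_add, integral_add, integral_const_mul,
    integral_const_mul, integral_const_mul, hmul, hmul, hmul, hmul, hmul]
  · simp [hX0, hY0]
    ring
  all_goals repeat' first
    | exact hint _ _ (by norm_num) (by norm_num)
    | apply Integrable.add
    | apply Integrable.const_mul

lemma iIndepFun.integral_sum_sq [IsProbabilityMeasure μ] {ι : Type*} {Z : ι → Ω → ℝ}
    (h : iIndepFun Z μ) (hZ : ∀ i, MemLp (Z i) 2 μ) (h0 : ∀ i, ∫ ω, Z i ω ∂μ = 0) (s : Finset ι) :
    ∫ ω, (∑ i ∈ s, Z i ω) ^ 2 ∂μ = ∑ i ∈ s, ∫ ω, Z i ω ^ 2 ∂μ := by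
  have hvar := IndepFun.variance_sum (s := s) (fun i _ => hZ i)
    fun i _ j _ hij => h.indepFun hij
  have hS0 : ∫ ω, (∑ i ∈ s, Z i) ω ∂μ = 0 := by
    simp [integral_finsetSum s fun i _ => (hZ i).integrable one_le_two, h0]
  rw [variance_of_integral_eq_zero (memLp_finsetSum' s fun i _ => hZ i).aemeasurable hS0,
    sum_congr rfl fun i _ => variance_of_integral_eq_zero (hZ i).aemeasurable (h0 i)] at hvar
  simpa using hvar

lemma iIndepFun.integral_sum_pow_four_le [IsProbabilityMeasure μ] {ι : Type*} {Z : ι → Ω → ℝ}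
    (h : iIndepFun Z μ) (hmeas : ∀ i, Measurable (Z i)) (hZ : ∀ i, MemLp (Z i) 4 μ)
    (h0 : ∀ i, ∫ ω, Z i ω ∂μ = 0) {A B : ℝ} (hA : ∀ i, ∫ ω, Z i ω ^ 2 ∂μ ≤ A)
    (hB : ∀ i, ∫ ω, Z i ω ^ 4 ∂μ ≤ B) (s : Finset ι) :
    ∫ ω, (∑ i ∈ s, Z i ω) ^ 4 ∂μ ≤ B * #s + 3 * A ^ 2 * #s ^ 2 := by
  classical
  induction s using Finset.induction_on with
  | empty => simp
  | @insert k s hk ih =>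
    have hindep : IndepFun (fun ω => ∑ i ∈ s, Z i ω) (Z k) μ := by
      simpa [sum_fn] using h.indepFun_finsetSum_of_notMem hmeas hk
    have hS : MemLp (fun ω => ∑ i ∈ s, Z i ω) 4 μ := memLp_finsetSum s fun i _ => hZ i
    have hS0 : ∫ ω, ∑ i ∈ s, Z i ω ∂μ = 0 := by
      simp [integral_finsetSum s fun i _ => (hZ i).integrable (by norm_num), h0]
    have hS2 : ∫ ω, (∑ i ∈ s, Z i ω) ^ 2 ∂μ ≤ #s * A := by
      rw [h.integral_sum_sq (fun i => (hZ i).mono_exponent (by norm_num)) h0]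
      simpa using sum_le_card_nsmul s _ A fun i _ => hA i
    have hS2_nonneg : 0 ≤ ∫ ω, (∑ i ∈ s, Z i ω) ^ 2 ∂μ := integral_nonneg fun _ => by positivity
    have hZ2_nonneg : 0 ≤ ∫ ω, Z k ω ^ 2 ∂μ := integral_nonneg fun _ => by positivity
    simp_rw [sum_insert hk, add_comm (Z k _)]
    rw [hindep.integral_add_pow_four hS (hZ k) hS0 (h0 k), card_insert_of_notMem hk]
    have := mul_le_mul hS2 (hA k) hZ2_nonneg (hS2_nonneg.trans hS2)
    push_cast
    nlinarith [hB k]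

lemma HasLaw.memLp_sq_sub_one {X : Ω → ℝ}
    (hX : HasLaw X (gaussianReal 0 1) μ) (p : ℝ≥0) : MemLp (fun ω => X ω ^ 2 - 1) p μ := by
  have h := (memLp_sq_gaussianReal 0 1 p).sub (memLp_const 1)
  rw [← hX.map_eq] at h
  exact (memLp_map_measure_iff (by fun_prop) hX.aemeasurable).1 h

lemma HasLaw.integral_sq_sub_one {X : Ω → ℝ}
    (hX : HasLaw X (gaussianReal 0 1) μ) : ∫ ω, (X ω ^ 2 - 1) ∂μ = 0 :=
  (hX.integral_comp (f := fun x => x ^ 2 - 1) (by fun_prop)).trans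
    integral_sq_sub_one_gaussianReal

lemma exists_integral_sum_mul_sq_sub_one_pow_four_le [IsProbabilityMeasure μ]
    {u : ℕ → Ω → ℝ} (hmeas : ∀ i, Measurable (u i)) (hindep : iIndepFun u μ)
    (hlaw : ∀ i, HasLaw (u i) (gaussianReal 0 1) μ) (K : ℝ) :
    ∃ C, ∀ w : ℕ → ℝ, (∀ i, |w i| ≤ K) → ∀ s : Finset ℕ,
      ∫ ω, (∑ i ∈ s, w i * (u i ω ^ 2 - 1)) ^ 4 ∂μ ≤ C * (#s : ℝ) ^ 2 := by
  set M : ℕ → ℝ := fun k => ∫ x, (x ^ 2 - 1) ^ k ∂gaussianReal 0 1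
  have hM : ∀ k, 0 ≤ M (2 * k) := fun k => integral_nonneg fun x => by
    simp only [pow_mul]; positivity
  refine ⟨K ^ 4 * M 4 + 3 * (K ^ 2 * M 2) ^ 2, fun w hw s => ?_⟩
  have hmoment : ∀ i k, ∫ ω, (w i * (u i ω ^ 2 - 1)) ^ k ∂μ = w i ^ k * M k := fun i k => by
    simp_rw [mul_pow]
    rw [integral_const_mul]
    exact congrArg _ ((hlaw i).integral_comp (f := fun x => (x ^ 2 - 1) ^ k) (by fun_prop))
  have hw_pow : ∀ i k, Even k → w i ^ k ≤ K ^ k := fun i k hk =>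
    hk.pow_abs (w i) ▸ pow_le_pow_left₀ (abs_nonneg _) (hw i) k
  have hZindep : iIndepFun (fun i ω => w i * (u i ω ^ 2 - 1)) μ :=
    hindep.comp (fun i x => w i * (x ^ 2 - 1)) fun i => by fun_prop
  have hZ := hZindep.integral_sum_pow_four_le (fun i => by fun_prop)
    (fun i => ((hlaw i).memLp_sq_sub_one 4).const_mul (w i))
    (fun i => by rw [integral_const_mul, (hlaw i).integral_sq_sub_one, mul_zero])
    (fun i => (hmoment i 2).trans_le (mul_le_mul_of_nonneg_right (hw_pow i 2 even_two) (hM 1)))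
    (fun i => (hmoment i 4).trans_le
      (mul_le_mul_of_nonneg_right (hw_pow i 4 (by decide)) (hM 2))) s
  have hcard : (#s : ℝ) ≤ (#s : ℝ) ^ 2 := by exact_mod_cast Nat.le_self_pow two_ne_zero _
  have hB : 0 ≤ K ^ 4 * M 4 := mul_nonneg (by positivity) (hM 2)
  calc _ ≤ K ^ 4 * M 4 * #s + 3 * (K ^ 2 * M 2) ^ 2 * #s ^ 2 := hZ
    _ ≤ _ := by nlinarith

end ProbabilityTheory

/-- Weighted SLLN for chi-squared variables: if `u_i` are i.i.d. standard normal and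
`c_i^{(n)} ≥ 0` are uniformly bounded with `(1/n) Σ_{i=1}^n c_i^{(n)} → c`, then
`(1/n) Σ_{i=1}^n c_i^{(n)} u_i² → c` almost surely. -/
theorem stmt8 {Ω : Type*} [MeasurableSpace Ω] (μ : Measure Ω) [IsProbabilityMeasure μ]
    (u : ℕ → Ω → ℝ) (hmeas : ∀ i, Measurable (u i))
    (hindep : iIndepFun u μ)
    (hgauss : ∀ i, Measure.map (u i) μ = gaussianReal 0 1)
    (c : ℕ → ℕ → ℝ) (hc0 : ∀ n i, 0 ≤ c n i)
    (K : ℝ) (hK : ∀ n i, c n i ≤ K)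
    (cl : ℝ)
    (hcl : Tendsto (fun n : ℕ => (1 / (n : ℝ)) * ∑ i ∈ Finset.Icc 1 n, c n i)
      atTop (nhds cl)) :
    ∀ᵐ ω ∂μ, Tendsto (fun n : ℕ => (1 / (n : ℝ)) * ∑ i ∈ Finset.Icc 1 n, c n i * (u i ω)^2)
      atTop (nhds cl) := by
  have hlaw : ∀ i, HasLaw (u i) (gaussianReal 0 1) μ := fun i => ⟨(hmeas i).aemeasurable, hgauss i⟩
  obtain ⟨C, hC⟩ := exists_integral_sum_mul_sq_sub_one_pow_four_le hmeas hindep hlaw K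
  have hc : ∀ n i, |c n i| ≤ K := fun n i =>
    abs_le.2 ⟨by linarith [hc0 n i, hK n i], hK n i⟩
  filter_upwards [ae_tendsto_div_of_integral_pow_four_le
    (fun n => memLp_finsetSum _ fun i _ => ((hlaw i).memLp_sq_sub_one 4).const_mul (c n i))
    (fun n => by simpa using hC (c n) (hc n) (Icc 1 n))] with ω hω
  have hsplit : ∀ n : ℕ, 1 / (n : ℝ) * ∑ i ∈ Icc 1 n, c n i * u i ω ^ 2
      = (∑ i ∈ Icc 1 n, c n i * (u i ω ^ 2 - 1)) / n + 1 / (n : ℝ) * ∑ i ∈ Icc 1 n, c n i :=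
    fun n => by simp only [mul_sub, mul_one, sum_sub_distrib]; ring
  simpa only [hsplit, zero_add] using hω.add hcl
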